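/- If $\Bbbk$ is an uncountable field and $X \subseteq \Bbbk^n$ contains the intersection of countably many dense Zariski-open subsets of $\Bbbk^n$, then $X$ is nonempty and Zariski-dense in $\Bbbk^n$. -/
import Mathlib

open MvPolynomial

/-- Over an uncountable field, countably many nonzero one-variable polynomials have a common
non-root. -/
lemma aux_poly_exists_ne_zero {k : Type*} [Field k] [Uncountable k]
    (p : ℕ → Polynomial k) (hp : ∀ i, p i ≠ 0) :
    ∃ t : k, ∀ i, (p i).eval t ≠ 0 := by
  have hcnt : (⋃ i, {x | (p i).IsRoot x}).Countable :=
    Set.countable_iUnion fun i => (Polynomial.finite_setOf_isRoot (hp i)).countable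
  by_contra h
  push_neg at h
  have : (Set.univ : Set k) ⊆ ⋃ i, {x | (p i).IsRoot x} := by
    intro t _
    obtain ⟨i, hi⟩ := h t
    exact Set.mem_iUnion.2 ⟨i, hi⟩
  have : (Set.univ : Set k).Countable := hcnt.mono this
  rw [Set.countable_univ_iff] at this
  exact (not_countable (α := k)) this

/-- Over an uncountable field, countably many nonzero multivariate polynomials have a common
point of non-vanishing. -/
lemma aux_mv_exists_ne_zero {k : Type*} [Field k] [Uncountable k] :
    ∀ (n : ℕ) (f : ℕ → MvPolynomial (Fin n) k), (∀ i, f i ≠ 0) →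
      ∃ x : Fin n → k, ∀ i, eval x (f i) ≠ 0 := by
  intro n
  induction n with
  | zero =>
    intro f hf
    refine ⟨fun i => i.elim0, fun i => ?_⟩
    obtain ⟨c, hc⟩ := MvPolynomial.C_surjective (Fin 0) (f i)
    have hx : (fun i : Fin 0 => i.elim0) = (default : Fin 0 → k) := Subsingleton.elim _ _
    rw [← hc, eval_C]
    rintro rfl
    exact hf i (by rw [← hc, map_zero])
  | succ n ih =>
    intro f hf
    -- leading coefficients (as polynomials in the first variable) are nonzero mv polys
    have hlc : ∀ i, (finSuccEquiv k n (f i)).leadingCoeff ≠ 0 := by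
      intro i
      simp only [Polynomial.leadingCoeff_ne_zero]
      intro h0
      apply hf i
      have := (finSuccEquiv k n).injective
      apply this
      rw [h0, map_zero]
    obtain ⟨y, hy⟩ := ih (fun i => (finSuccEquiv k n (f i)).leadingCoeff) hlc
    set p : ℕ → Polynomial k := fun i => Polynomial.map (eval y) (finSuccEquiv k n (f i)) with hp
    have hpne : ∀ i, p i ≠ 0 := by
      intro i h0
      apply hy i
      have : (p i).coeff (finSuccEquiv k n (f i)).natDegree = 0 := by rw [h0]; simp
      rwa [hp, Polynomial.coeff_map] at this
    obtain ⟨t, ht⟩ := aux_poly_exists_ne_zero p hpne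
    refine ⟨Fin.cons t y, fun i => ?_⟩
    rw [eval_eq_eval_mv_eval']
    exact ht i

def zariskiAffine (k : Type*) [CommRing k] (n : ℕ) : TopologicalSpace (Fin n → k) :=
  TopologicalSpace.generateFrom
    {U | ∃ f : MvPolynomial (Fin n) k, U = {x | eval x f ≠ 0}}

/-- Over an uncountable field, a "massive" subset of affine `n`-space — one containing the
intersection of countably many dense Zariski-open subsets — is nonempty and Zariski-dense. -/
theorem massive_subset_nonempty_and_dense
    (k : Type*) [Field k] [Uncountable k] (n : ℕ)
    (U : ℕ → Set (Fin n → k))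
    (hopen : ∀ i, @IsOpen _ (zariskiAffine k n) (U i))
    (hdense : ∀ i, @Dense _ (zariskiAffine k n) (U i))
    (X : Set (Fin n → k)) (hX : (⋂ i, U i) ⊆ X) :
    X.Nonempty ∧ @Dense _ (zariskiAffine k n) X := by
  letI T := zariskiAffine k n
  set S : Set (Set (Fin n → k)) :=
    {U | ∃ f : MvPolynomial (Fin n) k, U = {x | eval x f ≠ 0}} with hS
  have hbasis : TopologicalSpace.IsTopologicalBasis (t := T) S := by
    refine ⟨?_, ?_, rfl⟩
    · rintro t₁ ⟨f, rfl⟩ t₂ ⟨g, rfl⟩ x hx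
      refine ⟨{x | eval x (f * g) ≠ 0}, ⟨f * g, rfl⟩, ?_, ?_⟩
      · simp only [Set.mem_setOf_eq, map_mul]
        exact mul_ne_zero hx.1 hx.2
      · intro z hz
        simp only [Set.mem_setOf_eq, map_mul] at hz
        exact ⟨left_ne_zero_of_mul hz, right_ne_zero_of_mul hz⟩
    · apply Set.eq_univ_of_univ_subset
      intro x _
      refine Set.mem_sUnion.2 ⟨{x | eval x (1 : MvPolynomial (Fin n) k) ≠ 0}, ⟨1, rfl⟩, ?_⟩
      simp
  -- For each i, find a nonzero polynomial f i with D(f i) ⊆ U i.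
  have key : ∀ i, ∃ f : MvPolynomial (Fin n) k, f ≠ 0 ∧ {x | eval x f ≠ 0} ⊆ U i := by
    intro i
    have hne : (U i).Nonempty := Dense.nonempty (hdense i)
    obtain ⟨x, hx⟩ := hne
    obtain ⟨v, hvS, hxv, hvU⟩ := hbasis.exists_subset_of_mem_open hx (hopen i)
    obtain ⟨f, rfl⟩ := hvS
    refine ⟨f, ?_, hvU⟩
    intro h0
    exact hxv (by rw [h0, map_zero])
  choose f hf0 hfU using key
  -- Main claim: for any nonzero g, D(g) meets ⋂ U i.
  have main : ∀ g : MvPolynomial (Fin n) k, g ≠ 0 →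
      ∃ x, eval x g ≠ 0 ∧ x ∈ ⋂ i, U i := by
    intro g hg
    obtain ⟨x, hx⟩ := aux_mv_exists_ne_zero n (fun i => g * f i)
      (fun i => mul_ne_zero hg (hf0 i))
    refine ⟨x, ?_, Set.mem_iInter.2 fun i => hfU i ?_⟩
    · have := hx 0; rw [map_mul] at this; exact left_ne_zero_of_mul this
    · have := hx i; rw [map_mul] at this; exact right_ne_zero_of_mul this
  constructor
  · obtain ⟨x, -, hx⟩ := main 1 one_ne_zero
    exact ⟨x, hX hx⟩
  · rw [hbasis.dense_iff]
    rintro o ⟨g, rfl⟩ ⟨x0, hx0⟩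
    have hg : g ≠ 0 := fun h0 => hx0 (by rw [h0, map_zero])
    obtain ⟨x, hxg, hxU⟩ := main g hg
    exact ⟨x, hxg, hX hxU⟩
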